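/- Let ε be a real number with 0 < ε < 1 and set c = 1/(1-ε). Let T be a nonempty finite string with a factorization T = p₁ p₂ ⋯ p_z into nonempty phrases such that each phrase either has length 1 or occurs in T starting at some strictly earlier position (an LZ77-type parse). Let P be a finite string, and let W be a nonempty common contiguous substring of P and T of maximum length L. Then there exists a common contiguous substring W' of P and T with |W'| > (1-ε)·L such that W' = A' ++ B', where A' is nonempty with |A'| = ⌈c^{e₁}⌉ for some natural number e₁ and A' occurs in T ending exactly at the last position of some phrase, and B' is empty or satisfies |B'| = ⌈c^{e₂}⌉ for some natural number e₂ and occurs in T starting exactly at the first position of some phrase, with the occurrence of A' immediately followed in T by the occurrence of B'. -/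
import Mathlib

/-- `S` occurs in `T` at (0-indexed) position `a`: `T[a .. a + |S| - 1] = S`. -/
def OccursAt {α : Type*} (T S : List α) (a : ℕ) : Prop :=
  (T.drop a).take S.length = S

/-- The starting position of the `t`-th phrase (0-indexed) of the factorization `ps`:
the sum of the lengths of the preceding phrases. -/
def phraseStart {α : Type*} (ps : List (List α)) (t : ℕ) : ℕ :=
  ((ps.take t).map List.length).sum

section Helpers
variable {α : Type*}

lemma occursAt_infix {T S : List α} {a : ℕ} (h : OccursAt T S a) : S <:+: T := by
  rw [← h]
  exact (List.take_prefix _ _).isInfix.trans (List.drop_suffix a T).isInfix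

lemma occursAt_le {T S : List α} {a : ℕ} (hS : S ≠ []) (h : OccursAt T S a) :
    a + S.length ≤ T.length := by
  have h1 := congrArg List.length h
  simp only [List.length_take, List.length_drop] at h1
  have h2 : 0 < S.length := List.length_pos_iff.mpr hS
  omega

lemma occursAt_take {T S : List α} {a : ℕ} (h : OccursAt T S a) (n : ℕ) :
    OccursAt T (S.take n) a := by
  show (T.drop a).take (S.take n).length = S.take n
  rw [List.length_take, ← List.take_take, h]

lemma occursAt_drop {T S : List α} {a : ℕ} (h : OccursAt T S a) (n : ℕ) :
    OccursAt T (S.drop n) (a + n) := by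
  show (T.drop (a + n)).take (S.drop n).length = S.drop n
  rw [List.length_drop]
  conv_rhs => rw [← h]
  rw [List.drop_take, List.drop_drop]

lemma phraseStart_cons_succ (p : List α) (ps : List (List α)) (t : ℕ) :
    phraseStart (p :: ps) (t + 1) = p.length + phraseStart ps t := by
  simp [phraseStart]

lemma occursAt_phrase (ps : List (List α)) : ∀ t, t < ps.length →
    OccursAt ps.flatten (ps.getD t []) (phraseStart ps t) := by
  induction ps with
  | nil => intro t ht; simp at ht
  | cons p ps ih =>
    intro t ht
    cases t with
    | zero =>
      show (((p :: ps).flatten).drop 0).take p.length = p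
      simp [List.take_left]
    | succ t =>
      have h := ih t (by simpa using ht)
      show (((p :: ps).flatten).drop (phraseStart (p :: ps) (t+1))).take _ = _
      rw [phraseStart_cons_succ, List.getD_cons_succ, List.flatten_cons,
        ← List.drop_drop, List.drop_left]
      exact h

lemma exists_phrase (ps : List (List α)) : ∀ q, q < ps.flatten.length →
    ∃ t, t < ps.length ∧ phraseStart ps t ≤ q ∧
      q < phraseStart ps t + (ps.getD t []).length := by
  induction ps with
  | nil => intro q hq; simp at hq
  | cons p ps ih =>
    intro q hq
    by_cases h : q < p.length
    · exact ⟨0, by simp, by simp [phraseStart], by simpa [phraseStart]⟩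
    · obtain ⟨t, ht, h1, h2⟩ := ih (q - p.length) (by
        simp only [List.flatten_cons, List.length_append] at hq; omega)
      refine ⟨t + 1, by simpa using ht, ?_, ?_⟩
      · rw [phraseStart_cons_succ]; omega
      · rw [phraseStart_cons_succ, List.getD_cons_succ]; omega

lemma phraseStart_of_le (ps : List (List α)) {u : ℕ} (h : ps.length ≤ u) :
    phraseStart ps u = ps.flatten.length := by
  rw [phraseStart, List.take_of_length_le h, List.length_flatten]

lemma phraseStart_succ (ps : List (List α)) : ∀ t, t < ps.length →
    phraseStart ps (t + 1) = phraseStart ps t + (ps.getD t []).length := by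
  induction ps with
  | nil => intro t ht; simp at ht
  | cons p ps ih =>
    intro t ht
    cases t with
    | zero => simp [phraseStart]
    | succ t =>
      rw [phraseStart_cons_succ, phraseStart_cons_succ, List.getD_cons_succ,
        ih t (by simpa using ht)]
      omega

lemma occursAt_sub {T p : List α} {b : ℕ} (hp : OccursAt T p b) (d m : ℕ)
    (h : d + m ≤ p.length) : (T.drop (b + d)).take m = (p.drop d).take m := by
  conv_rhs => rw [← hp]
  rw [List.drop_take, List.drop_drop, List.take_take]
  congr 1
  omega

lemma grid_lemma (ε : ℝ) (hε0 : 0 < ε) (hε1 : ε < 1) (n : ℕ) (hn : 1 ≤ n) :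
    ∃ e : ℕ, 1 ≤ ⌈(1 / (1 - ε)) ^ e⌉₊ ∧ ⌈(1 / (1 - ε)) ^ e⌉₊ ≤ n ∧
      (1 - ε) * (n : ℝ) < (⌈(1 / (1 - ε)) ^ e⌉₊ : ℝ) := by
  classical
  set c : ℝ := 1 / (1 - ε) with hcdef
  have h1ε : (0 : ℝ) < 1 - ε := by linarith
  have hc1 : 1 < c := by rw [hcdef, lt_div_iff₀ h1ε]; linarith
  have hex : ∃ e : ℕ, (n : ℝ) < c ^ e := pow_unbounded_of_one_lt _ hc1
  have he₀ : (n : ℝ) < c ^ Nat.find hex := Nat.find_spec hex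
  have he₀pos : Nat.find hex ≠ 0 := by
    intro h
    rw [h, pow_zero] at he₀
    have : (1 : ℝ) ≤ (n : ℝ) := by exact_mod_cast hn
    linarith
  obtain ⟨e, he⟩ := Nat.exists_eq_succ_of_ne_zero he₀pos
  have hle : c ^ e ≤ (n : ℝ) := le_of_not_gt (Nat.find_min hex (by omega))
  have h1le : (1 : ℝ) ≤ c ^ e := one_le_pow₀ hc1.le
  have hceil1 : 1 ≤ ⌈c ^ e⌉₊ := by
    have := Nat.le_ceil (c ^ e)
    have h0 : (0 : ℝ) < c ^ e := by linarith
    exact Nat.one_le_iff_ne_zero.mpr (by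
      intro h; rw [h] at this; push_cast at this; linarith)
  refine ⟨e, hceil1, Nat.ceil_le.mpr hle, ?_⟩
  have h2 : (n : ℝ) < c ^ (e + 1) := by
    rw [← Nat.succ_eq_add_one, ← he]; exact he₀
  have h3 : c ^ (e + 1) = c * c ^ e := by ring
  have h4 : c ^ e ≤ (⌈c ^ e⌉₊ : ℝ) := Nat.le_ceil _
  have hcpos : (0 : ℝ) < c := by linarith
  have h5 : (n : ℝ) < c * (⌈c ^ e⌉₊ : ℝ) := by nlinarith
  have h6 : (1 - ε) * c = 1 := by rw [hcdef]; field_simp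
  nlinarith [h5, h6, h1ε, hceil1]

end Helpers

/-- **correctness of the index.** Let `0 < ε < 1` and `c = 1/(1-ε)`.
Let `T` be a nonempty string with an LZ77-type parse into nonempty phrases
`p₁ ⋯ p_z` (each phrase has length `1` or occurs in `T` strictly earlier), let `P` be
a string, and let `W` be a nonempty common contiguous substring of `P` and `T` of
maximum length `L`. Then there is a common contiguous substring `W' = A' ++ B'` of
`P` and `T` with `|W'| > (1-ε)·L`, where `A'` is nonempty of grid length `⌈c^{e₁}⌉`
and occurs in `T` ending exactly at the last position of some phrase, and `B'` is
empty or of grid length `⌈c^{e₂}⌉` and occurs in `T` starting exactly at the first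
position of some phrase, the occurrence of `A'` being immediately followed by the
occurrence of `B'`. -/
theorem index_correctness {α : Type*} (ε : ℝ) (hε0 : 0 < ε) (hε1 : ε < 1)
    (T : List α) (hT : T ≠ []) (ps : List (List α)) (hfact : ps.flatten = T)
    (hne : ∀ p ∈ ps, p ≠ [])
    (hparse : ∀ t, t < ps.length →
      (ps.getD t []).length = 1 ∨
        ∃ s, s < phraseStart ps t ∧ OccursAt T (ps.getD t []) s)
    (P W : List α) (hWne : W ≠ []) (hWP : W <:+: P) (hWT : W <:+: T)
    (hmax : ∀ W', W' <:+: P → W' <:+: T → W'.length ≤ W.length) :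
    ∃ A' B' : List α, ∃ a t : ℕ,
      A' ≠ [] ∧
      (∃ e₁ : ℕ, A'.length = ⌈(1 / (1 - ε)) ^ e₁⌉₊) ∧
      (A' ++ B') <:+: P ∧ (A' ++ B') <:+: T ∧
      t < ps.length ∧
      OccursAt T A' a ∧
      a + A'.length = phraseStart ps t + (ps.getD t []).length ∧
      OccursAt T B' (a + A'.length) ∧
      (B' = [] ∨
        ((∃ e₂ : ℕ, B'.length = ⌈(1 / (1 - ε)) ^ e₂⌉₊) ∧
          ∃ u, u < ps.length ∧ phraseStart ps u = a + A'.length)) ∧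
      (1 - ε) * (W.length : ℝ) < ((A' ++ B').length : ℝ) := by
  classical
  have hWlen : 0 < W.length := List.length_pos_iff.mpr hWne
  -- W occurs somewhere in T
  have hex : ∃ a, OccursAt T W a := by
    obtain ⟨u, v, huv⟩ := hWT
    refine ⟨u.length, ?_⟩
    show (T.drop u.length).take W.length = W
    rw [← huv, List.append_assoc, List.drop_left, List.take_left]
  set q := Nat.find hex with hqdef
  have hq : OccursAt T W q := Nat.find_spec hex
  have hqT : q + W.length ≤ T.length := occursAt_le hWne hq
  have hqlt : q < T.length := by omega
  subst hfact
  obtain ⟨t, ht, hstart, hend⟩ := exists_phrase ps q hqlt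
  by_cases hcase : q + W.length ≤ phraseStart ps t + (ps.getD t []).length
  · -- W lies inside phrase t
    rcases hparse t ht with h1 | ⟨s, hs, hocc⟩
    · -- phrase has length 1, so W = phrase
      have hW1 : W.length = 1 := by omega
      have hq0 : q = phraseStart ps t := by omega
      refine ⟨W, [], q, t, hWne, ⟨0, by simp [hW1]⟩, by simpa using hWP,
        by simpa using hWT, ht, hq, by omega, by simp [OccursAt], Or.inl rfl, ?_⟩
      rw [List.append_nil, hW1]
      push_cast
      linarith
    · -- phrase occurs strictly earlier: contradicts minimality of q
      exfalso
      have hpocc : OccursAt ps.flatten (ps.getD t []) (phraseStart ps t) :=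
        occursAt_phrase ps t ht
      set d := q - phraseStart ps t with hd
      have hdW : d + W.length ≤ (ps.getD t []).length := by omega
      have h1 : (ps.flatten.drop (phraseStart ps t + d)).take W.length
          = ((ps.getD t []).drop d).take W.length := occursAt_sub hpocc d _ hdW
      have h2 : (ps.flatten.drop (s + d)).take W.length
          = ((ps.getD t []).drop d).take W.length := occursAt_sub hocc d _ hdW
      have h3 : OccursAt ps.flatten W (s + d) := by
        show (ps.flatten.drop (s + d)).take W.length = W
        rw [h2, ← h1]
        have : phraseStart ps t + d = q := by omega
        rw [this]
        exact hq
      exact Nat.find_min hex (show s + d < q by omega) h3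
  · -- a phrase boundary falls strictly inside W
    push_neg at hcase
    set b := phraseStart ps t + (ps.getD t []).length with hb
    have hqb : q < b := hend
    have hbW : b < q + W.length := hcase
    set lenA := b - q with hlenA
    set A := W.take lenA with hA
    set B := W.drop lenA with hB
    have hAlen : A.length = lenA := by
      rw [hA, List.length_take]; omega
    have hBlen : B.length = W.length - lenA := by
      rw [hB, List.length_drop]
    have hA1 : 1 ≤ lenA := by omega
    have hB1 : 1 ≤ B.length := by omega
    obtain ⟨e₁, hg1pos, hg1le, hg1gt⟩ := grid_lemma ε hε0 hε1 lenA hA1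
    obtain ⟨e₂, hg2pos, hg2le, hg2gt⟩ := grid_lemma ε hε0 hε1 B.length hB1
    set g₁ := ⌈(1 / (1 - ε)) ^ e₁⌉₊ with hg1
    set g₂ := ⌈(1 / (1 - ε)) ^ e₂⌉₊ with hg2
    set A' := A.drop (lenA - g₁) with hA'
    set B' := B.take g₂ with hB'
    have hA'len : A'.length = g₁ := by
      rw [hA', List.length_drop, hAlen]; omega
    have hB'len : B'.length = g₂ := by
      rw [hB', List.length_take]; omega
    have hoccA : OccursAt ps.flatten A q := occursAt_take hq lenA
    have hoccA' : OccursAt ps.flatten A' (q + (lenA - g₁)) :=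
      occursAt_drop hoccA (lenA - g₁)
    have hoccB : OccursAt ps.flatten B (q + lenA) := occursAt_drop hq lenA
    have hqlenA : q + lenA = b := by omega
    have hoccB' : OccursAt ps.flatten B' b := by
      have h := occursAt_take hoccB g₂
      rwa [hqlenA] at h
    have ha : q + (lenA - g₁) = b - g₁ := by omega
    have haA' : (b - g₁) + A'.length = b := by rw [hA'len]; omega
    -- A' ++ B' is an infix of W
    have hinfixW : (A' ++ B') <:+: W := by
      refine ⟨A.take (lenA - g₁), B.drop g₂, ?_⟩
      calc A.take (lenA - g₁) ++ (A' ++ B') ++ B.drop g₂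
          = (A.take (lenA - g₁) ++ A') ++ (B' ++ B.drop g₂) := by
            simp [List.append_assoc]
        _ = A ++ B := by rw [hA', hB', List.take_append_drop, List.take_append_drop]
        _ = W := by rw [hA, hB, List.take_append_drop]
    have hsucc : phraseStart ps (t + 1) = b := phraseStart_succ ps t ht
    have ht1 : t + 1 < ps.length := by
      by_contra h
      push_neg at h
      have h2 := phraseStart_of_le ps h
      rw [hsucc] at h2
      omega
    refine ⟨A', B', b - g₁, t, ?_, ⟨e₁, hA'len⟩, hinfixW.trans hWP,
      hinfixW.trans hWT, ht, ?_, ?_, ?_, ?_, ?_⟩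
    · exact List.ne_nil_of_length_pos (by rw [hA'len]; omega)
    · rw [← ha]; exact hoccA'
    · rw [haA']
    · rw [haA']; exact hoccB'
    · exact Or.inr ⟨⟨e₂, hB'len⟩, t + 1, ht1, by rw [hsucc, haA']⟩
    · rw [List.length_append, hA'len, hB'len]
      have hWsplit0 : W.length = lenA + B.length := by omega
      have hWsplit : (W.length : ℝ) = (lenA : ℝ) + (B.length : ℝ) := by
        exact_mod_cast hWsplit0
      rw [hWsplit]
      push_cast
      linarith [hg1gt, hg2gt]
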